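/- Let P be a path on t vertices with colouring ω from colour-set C, where |C| = c, and let Q_1,…,Q_r be a collection of pairwise vertex-disjoint subpaths of P. Then m(P,ω) ≤ t − Σ_{i=1}^r (|Q_i| − 1) − ⌈(t − Σ_{i=1}^r (|Q_i| − 1))/c⌉ + Σ_{i=1}^r m(Q_i,ω|_{Q_i}), where m(Q_i,ω|_{Q_i}) is the minimum number of moves needed to flood the path Q_i with its restricted colouring. -/

import Mathlib

open Classical SimpleGraph

/-- The spanning subgraph of `G` whose edges join vertices of equal colour under `ω`.
Its connected components are the monochromatic components of `(G, ω)`. -/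
def monoSubgraph {V C : Type*} (G : SimpleGraph V) (ω : V → C) : SimpleGraph V where
  Adj u v := G.Adj u v ∧ ω u = ω v
  symm := ⟨fun u v h => ⟨h.1.symm, h.2.symm⟩⟩
  loopless := ⟨fun u h => G.loopless.irrefl u h.1⟩

/-- A single flooding move `(v, d)`: every vertex in the monochromatic component of `v`
receives colour `d`. -/
noncomputable def floodMove {V C : Type*} (G : SimpleGraph V) (ω : V → C) (v : V) (d : C) :
    V → C :=
  fun u => if (monoSubgraph G ω).Reachable v u then d else ω u

/-- Apply a sequence of flooding moves, in order. -/
noncomputable def floodSeq {V C : Type*} (G : SimpleGraph V) :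
    List (V × C) → (V → C) → (V → C)
  | [], ω => ω
  | m :: ms, ω => floodSeq G ms (floodMove G ω m.1 m.2)

/-- `m(G, ω, d)`: the minimum number of moves needed to give every vertex colour `d`,
starting from the colouring `ω`. -/
noncomputable def floodCost {V C : Type*} (G : SimpleGraph V) (ω : V → C) (d : C) : ℕ :=
  sInf {k | ∃ ms : List (V × C), ms.length = k ∧ ∀ v, floodSeq G ms ω v = d}

/-- `m(G, ω)`: the minimum over target colours `d ∈ C` of `m(G, ω, d)`. -/
noncomputable def floodCostMin {V C : Type*} (G : SimpleGraph V) (ω : V → C) : ℕ :=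
  sInf {k | ∃ d : C, floodCost G ω d = k}

/-- `M_c(G)`: the maximum of `m(G, ω)` over all surjective colourings
`ω : V(G) → {1, …, c}`. -/
noncomputable def maxFloodCost {V : Type*} (c : ℕ) (G : SimpleGraph V) : ℕ :=
  sSup {k | ∃ ω : V → Fin c, Function.Surjective ω ∧ floodCostMin G ω = k}

/-!
Replay inside `P` optimal floodings of the `Qᵢ`, one move at a time, always on the leftmost `Qᵢ`
that is not yet monochromatic. A move never breaks a monochromatic edge, so monochromatic subpaths
stay monochromatic, and a move spilling into a later `Qⱼ` only merges an initial part of it with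
the block on its left; the remaining cost of every `Qⱼ` therefore never rises. After
`∑ m(Qᵢ)` moves each `Qᵢ` contains at most one block start, so `P` has at most
`T = t - ∑ (|Qᵢ| - 1)` monochromatic blocks. A path with `B` blocks is flooded to its most
frequent block colour `d` by recolouring the non-`d` blocks one at a time, in at most
`B - ⌈B/c⌉ ≤ T - ⌈T/c⌉` moves.
-/

open Finset

theorem Nat.sub_ceilDiv_mono {c x y : ℕ} (hc : 0 < c) (hxy : x ≤ y) :
    x - (x + c - 1) / c ≤ y - (y + c - 1) / c := by
  have : (y + c - 1) / c ≤ (x + c - 1) / c + (y - x) :=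
    calc (y + c - 1) / c ≤ (x + c - 1 + c * (y - x)) / c := by
          gcongr
          have := Nat.le_mul_of_pos_left (y - x) hc
          omega
      _ = (x + c - 1) / c + (y - x) := Nat.add_mul_div_left _ _ hc
  omega

theorem Nat.exists_cut_of_downward_closed {P : ℕ → Prop} {s e : ℕ} (hse : s ≤ e)
    (hP : ∀ x y, s ≤ x → x ≤ y → P y → P x) :
    ∃ s', s ≤ s' ∧ s' ≤ e ∧ (∀ x, s ≤ x → x < s' → P x) ∧ ∀ x, s' ≤ x → x < e → ¬ P x := by
  induction e, hse using Nat.le_induction with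
  | base => exact ⟨s, le_rfl, le_rfl, fun x _ _ => by omega, fun x _ _ => by omega⟩
  | succ e hse ih =>
    obtain ⟨s', hss', hs'e, hin, hout⟩ := ih
    by_cases hcut : s' = e ∧ P e
    · refine ⟨e + 1, by omega, le_rfl, fun x hsx hxe => ?_, fun x _ _ => by omega⟩
      obtain hx | rfl := Nat.lt_succ_iff_lt_or_eq.mp hxe
      · exact hin x hsx (hcut.1 ▸ hx)
      · exact hcut.2
    · refine ⟨s', hss', by omega, hin, fun x hs'x hxe hx => ?_⟩
      obtain hx' | rfl := Nat.lt_succ_iff_lt_or_eq.mp hxe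
      · exact hout x hs'x hx' hx
      · obtain rfl | hlt := eq_or_lt_of_le hs'x
        · exact hcut ⟨rfl, hx⟩
        · exact hout s' le_rfl hlt (hP s' x hss' hs'x hx)

theorem Finset.card_add_sum_card_sub_one_le {α ι : Type*} [Fintype α] [DecidableEq α]
    {S : Finset α} {s : Finset ι} {I : ι → Finset α} (hI : (s : Set ι).PairwiseDisjoint I)
    (hS : ∀ i ∈ s, #(S ∩ I i) ≤ 1) : #S + ∑ i ∈ s, (#(I i) - 1) ≤ Fintype.card α := by
  have hsdiff : ∀ i ∈ s, #(I i) - 1 ≤ #(I i \ S) := fun i hi => by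
    have := card_sdiff_add_card_inter (I i) S
    rw [inter_comm] at this
    have := hS i hi
    omega
  calc #S + ∑ i ∈ s, (#(I i) - 1) ≤ #S + ∑ i ∈ s, #(I i \ S) := by
        gcongr with i hi
        exact hsdiff i hi
    _ = #S + #(s.biUnion fun i => I i \ S) := by
      rw [card_biUnion (hI.mono fun i => sdiff_subset)]
    _ ≤ #S + #Sᶜ := by
      gcongr
      intro x hx
      simp only [mem_biUnion, mem_sdiff] at hx
      obtain ⟨i, -, -, hxS⟩ := hx
      exact mem_compl.mpr hxS
    _ = Fintype.card α := card_add_card_compl S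

theorem Fin.card_add_sum_le_of_card_filter_le_one {n r : ℕ} {a L : Fin r → ℕ}
    (hend : ∀ j, a j + L j ≤ n) (hdisj : ∀ i j, i ≠ j → a i + L i ≤ a j ∨ a j + L j ≤ a i)
    (S : Finset (Fin n)) (hS : ∀ j, #(S.filter fun u : Fin n => a j ≤ u ∧ u < a j + L j) ≤ 1) :
    #S + ∑ j, (L j - 1) ≤ n := by
  have hI : ∀ j, ∀ m ∈ Finset.Ico (a j) (a j + L j), m < n := fun j m hm => by
    have := hend j
    simp only [mem_Ico] at hm
    omega
  let I j := (Finset.Ico (a j) (a j + L j)).attachFin (hI j)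
  have hmem : ∀ j (u : Fin n), u ∈ I j ↔ a j ≤ u ∧ u < a j + L j := fun j u => by
    simp [I, mem_attachFin]
  have hcard : ∀ j, #(I j) = L j := fun j => by simp [I, card_attachFin]
  have hdisjI : ((univ : Finset (Fin r)) : Set (Fin r)).PairwiseDisjoint I := by
    intro i _ j _ hij
    refine disjoint_left.mpr fun u hui huj => ?_
    rw [hmem] at hui huj
    have := hdisj i j hij
    omega
  have key := Finset.card_add_sum_card_sub_one_le (S := S) hdisjI fun j _ =>
    (card_le_card fun u hu => by
      rw [mem_inter, hmem] at hu
      exact mem_filter.mpr hu).trans (hS j)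
  simpa [hcard] using key

section General

variable {V C : Type*} (G : SimpleGraph V)

theorem floodSeq_append (l₁ l₂ : List (V × C)) (ω : V → C) :
    floodSeq G (l₁ ++ l₂) ω = floodSeq G l₂ (floodSeq G l₁ ω) := by
  induction l₁ generalizing ω with
  | nil => rfl
  | cons m ms ih => exact ih _

theorem floodMove_self (ω : V → C) (v : V) (d : C) : floodMove G ω v d v = d :=
  if_pos (Reachable.refl v)

theorem floodMove_eq_of_ne {ω : V → C} {v u : V} {d : C} (h : floodMove G ω v d u ≠ d) :
    floodMove G ω v d u = ω u := by
  unfold floodMove at h ⊢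
  split_ifs at h ⊢ with hr
  · exact absurd rfl h
  · rfl

theorem floodMove_eq_of_reachable {ω : V → C} {v v' : V}
    (h : (monoSubgraph G ω).Reachable v v') (d : C) :
    floodMove G ω v d = floodMove G ω v' d := by
  funext u
  have hu : (monoSubgraph G ω).Reachable v u ↔ (monoSubgraph G ω).Reachable v' u :=
    ⟨h.symm.trans, h.trans⟩
  simp only [floodMove, hu]

theorem floodMove_eq_floodMove_of_adj {ω : V → C} {u w : V} (hadj : G.Adj u w)
    (hω : ω u = ω w) (v : V) (d : C) : floodMove G ω v d u = floodMove G ω v d w := by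
  have huw : (monoSubgraph G ω).Reachable u w := Adj.reachable ⟨hadj, hω⟩
  have hvw : (monoSubgraph G ω).Reachable v u ↔ (monoSubgraph G ω).Reachable v w :=
    ⟨fun h => h.trans huw, fun h => h.trans huw.symm⟩
  simp only [floodMove, hvw, hω]

theorem floodMove_of_forall_eq (hG : G.Preconnected) {ω : V → C} {c : C} (hω : ∀ u, ω u = c)
    (v : V) (d : C) (u : V) : floodMove G ω v d u = d :=
  if_pos ((hG v u).mono fun x y hxy => show G.Adj x y ∧ ω x = ω y from ⟨hxy, by rw [hω, hω]⟩)

theorem floodSeq_eq_of_forall_snd_eq {d : C} {ms : List (V × C)} (hd : ∀ m ∈ ms, m.2 = d)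
    {ω : V → C} {v : V} (hv : ω v = d ∨ v ∈ ms.map Prod.fst) : floodSeq G ms ω v = d := by
  induction ms generalizing ω with
  | nil => simpa [floodSeq] using hv
  | cons m ms ih =>
    obtain ⟨u, d'⟩ := m
    obtain rfl : d' = d := hd _ List.mem_cons_self
    refine ih (fun m hm => hd m (List.mem_cons_of_mem _ hm)) ?_
    by_cases hvu : v = u
    · exact .inl (hvu ▸ floodMove_self G ω v d')
    · simp only [List.map_cons, List.mem_cons, hvu, false_or] at hv
      refine hv.imp_left fun hω => ?_
      by_contra hne
      exact hne ((floodMove_eq_of_ne G hne).trans hω)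

theorem exists_floodSeq_eq [Finite V] (ω : V → C) (d : C) :
    ∃ ms : List (V × C), ∀ v, floodSeq G ms ω v = d := by
  have := Fintype.ofFinite V
  refine ⟨(univ.toList).map (·, d), fun v => floodSeq_eq_of_forall_snd_eq G ?_ (.inr ?_)⟩
  · simp
  · simp [List.map_map, Function.comp_def]

theorem floodCostMin_le_length {ω : V → C} {ms : List (V × C)} {d : C}
    (h : ∀ v, floodSeq G ms ω v = d) : floodCostMin G ω ≤ ms.length :=
  calc floodCostMin G ω ≤ floodCost G ω d := Nat.sInf_le ⟨d, rfl⟩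
    _ ≤ ms.length := Nat.sInf_le ⟨ms, rfl, h⟩

theorem exists_length_eq_floodCostMin [Finite V] [Nonempty C] (ω : V → C) :
    ∃ (ms : List (V × C)) (d : C), ms.length = floodCostMin G ω ∧
      ∀ v, floodSeq G ms ω v = d := by
  obtain ⟨d, hd⟩ : floodCostMin G ω ∈ {k | ∃ d : C, floodCost G ω d = k} :=
    Nat.sInf_mem ⟨_, Classical.arbitrary C, rfl⟩
  obtain ⟨ms, hms⟩ := exists_floodSeq_eq G ω d
  obtain ⟨ms, hlen, hflood⟩ := Nat.sInf_mem (s := {k | ∃ ms : List (V × C),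
    ms.length = k ∧ ∀ v, floodSeq G ms ω v = d}) ⟨_, ms, rfl, hms⟩
  exact ⟨ms, d, hlen.trans hd, hflood⟩

theorem floodCostMin_le_length_add [Finite V] [Nonempty C] (ω : V → C) (ms : List (V × C)) :
    floodCostMin G ω ≤ ms.length + floodCostMin G (floodSeq G ms ω) := by
  obtain ⟨ms', d, hlen, hflood⟩ := exists_length_eq_floodCostMin G (floodSeq G ms ω)
  rw [← hlen, ← List.length_append]
  exact floodCostMin_le_length G (d := d) fun v => by rw [floodSeq_append, hflood]

theorem floodCostMin_eq_zero_iff [Finite V] [Nonempty C] {ω : V → C} :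
    floodCostMin G ω = 0 ↔ ∃ c, ∀ v, ω v = c := by
  refine ⟨fun h => ?_, fun ⟨c, hc⟩ => Nat.le_zero.mp (floodCostMin_le_length G (ms := []) hc)⟩
  obtain ⟨ms, d, hlen, hflood⟩ := exists_length_eq_floodCostMin G ω
  rw [h, List.length_eq_zero_iff] at hlen
  subst hlen
  exact ⟨d, hflood⟩

theorem exists_floodCostMin_floodMove_lt [Finite V] [Nonempty C] {ω : V → C}
    (h : floodCostMin G ω ≠ 0) :
    ∃ v d, floodCostMin G (floodMove G ω v d) < floodCostMin G ω := by
  obtain ⟨ms, d, hlen, hflood⟩ := exists_length_eq_floodCostMin G ω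
  match ms, hlen, hflood with
  | [], hlen, _ => exact absurd hlen.symm h
  | (v, d') :: ms, hlen, hflood =>
    refine ⟨v, d', lt_of_le_of_lt (floodCostMin_le_length G (ms := ms) hflood) ?_⟩
    simp only [List.length_cons] at hlen
    omega

end General

namespace PathFlood

variable {C : Type*} {n r : ℕ}

noncomputable def blockStarts (g : Fin n → C) : Finset (Fin n) :=
  univ.filter fun v => ∀ u : Fin n, (u : ℕ) + 1 = v → g u ≠ g v

theorem blockStarts_floodMove_subset (g : Fin n → C) (v : Fin n) (d : C) :
    blockStarts (floodMove (pathGraph n) g v d) ⊆ blockStarts g := by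
  intro x hx
  simp only [blockStarts, mem_filter, mem_univ, true_and] at hx ⊢
  exact fun u hu hgu =>
    hx u hu (floodMove_eq_floodMove_of_adj _ (pathGraph_adj.mpr (.inl hu)) hgu v d)

theorem exists_mem_blockStarts_eq (g : Fin n → C) (x : Fin n) :
    ∃ y ∈ blockStarts g, g y = g x := by
  obtain ⟨k, hk⟩ := x
  induction k with
  | zero =>
    refine ⟨_, ?_, rfl⟩
    simp [blockStarts]
  | succ k ih =>
    by_cases hx : ⟨k + 1, hk⟩ ∈ blockStarts g
    · exact ⟨_, hx, rfl⟩
    simp only [blockStarts, mem_filter, mem_univ, true_and, not_forall,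
      not_not] at hx
    obtain ⟨u, hu, hgu⟩ := hx
    obtain ⟨y, hy, hgy⟩ := ih (by omega)
    refine ⟨y, hy, hgy.trans ?_⟩
    rw [← hgu, show (⟨k, by omega⟩ : Fin n) = u from Fin.ext (by simp only; omega)]

theorem exists_floodSeq_length_le_card_blockStarts (g : Fin n → C) (d : C) :
    ∃ ms : List (Fin n × C), ms.length ≤ #{v ∈ blockStarts g | g v ≠ d} ∧
      ∀ v, floodSeq (pathGraph n) ms g v = d := by
  induction hN : #{v ∈ blockStarts g | g v ≠ d} using Nat.strong_induction_on generalizing g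
    with | _ N ih => ?_
  by_cases hall : ∀ v, g v = d
  · exact ⟨[], Nat.zero_le _, hall⟩
  push Not at hall
  obtain ⟨x, hx⟩ := hall
  obtain ⟨v, hv, hgv⟩ := exists_mem_blockStarts_eq g x
  set g' := floodMove (pathGraph n) g v d
  have hsub : {u ∈ blockStarts g' | g' u ≠ d} ⊆ {u ∈ blockStarts g | g u ≠ d}.erase v := by
    intro u hu
    simp only [mem_filter, mem_erase] at hu ⊢
    have hgu : g' u = g u := floodMove_eq_of_ne _ hu.2
    refine ⟨fun huv => hu.2 (huv ▸ floodMove_self _ g v d), ?_, hgu ▸ hu.2⟩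
    exact blockStarts_floodMove_subset g v d hu.1
  have hlt : #{u ∈ blockStarts g' | g' u ≠ d} < N := by
    have := card_le_card hsub
    rw [card_erase_of_mem (by simp [hv, hgv, hx])] at this
    have : 0 < #{u ∈ blockStarts g | g u ≠ d} := card_pos.mpr ⟨v, by simp [hv, hgv, hx]⟩
    omega
  obtain ⟨ms, hlen, hms⟩ := ih _ hlt g' rfl
  exact ⟨(v, d) :: ms, by simp only [List.length_cons]; omega, hms⟩

theorem floodCostMin_le_card_blockStarts_sub [Fintype C] [Nonempty C] (g : Fin n → C) :
    floodCostMin (pathGraph n) g ≤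
      #(blockStarts g) - (#(blockStarts g) + Fintype.card C - 1) / Fintype.card C := by
  set B := blockStarts g with hB
  obtain ⟨d, -, hd⟩ := exists_max_image univ (fun d => #{v ∈ B | g v = d})
    univ_nonempty
  have hcard : #B ≤ Fintype.card C * #{v ∈ B | g v = d} := by
    rw [card_eq_sum_card_fiberwise (f := g) (t := univ) (fun _ _ => by simp)]
    simpa using sum_le_card_nsmul _ _ _ fun d' hd' => hd d' hd'
  have hceil : (#B + Fintype.card C - 1) / Fintype.card C ≤ #{v ∈ B | g v = d} := by
    rw [Nat.div_le_iff_le_mul_add_pred Fintype.card_pos]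
    omega
  obtain ⟨ms, hlen, hms⟩ := exists_floodSeq_length_le_card_blockStarts g d
  rw [← hB] at hlen
  have hsplit := card_filter_add_card_filter_not (s := B) (p := fun v => g v = d)
  simp only [ne_eq] at hlen
  exact (floodCostMin_le_length _ hms).trans (by omega)

def SameBlock (F : ℕ → C) (x y : ℕ) : Prop := ∀ z ∈ Set.uIcc x y, F z = F x

namespace SameBlock

variable {F : ℕ → C} {x y z : ℕ}

theorem refl (F : ℕ → C) (x : ℕ) : SameBlock F x x := fun z hz => by
  rw [Set.uIcc_self, Set.mem_singleton_iff] at hz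
  rw [hz]

theorem eq (h : SameBlock F x y) : F y = F x := h y Set.right_mem_uIcc

theorem symm (h : SameBlock F x y) : SameBlock F y x := fun z hz => by
  rw [h z (Set.uIcc_comm x y ▸ hz), h.eq]

theorem trans (hxy : SameBlock F x y) (hyz : SameBlock F y z) : SameBlock F x z := fun w hw => by
  rcases Set.uIcc_subset_uIcc_union_uIcc hw with hw | hw
  · exact hxy w hw
  · exact (hyz w hw).trans hxy.eq

theorem of_mem (h : SameBlock F x y) (hz : z ∈ Set.uIcc x y) : SameBlock F x z :=
  fun w hw => h w (Set.uIcc_subset_uIcc_left hz hw)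

end SameBlock

section Segments

variable [Inhabited C]

/-- Colourings of the path are read on all of `ℕ` (with the junk colour `default` from `n` on), so
that a segment `window g s m` can be formed without a proof of `s + m ≤ n`. -/
def extend (g : Fin n → C) (x : ℕ) : C := if h : x < n then g ⟨x, h⟩ else default

theorem extend_of_lt (g : Fin n → C) {x : ℕ} (h : x < n) : extend g x = g ⟨x, h⟩ := dif_pos h

@[simp]
theorem extend_val (g : Fin n → C) (v : Fin n) : extend g v = g v := dif_pos v.isLt

theorem reachable_iff_sameBlock (g : Fin n → C) (u v : Fin n) :
    (monoSubgraph (pathGraph n) g).Reachable u v ↔ SameBlock (extend g) u v := by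
  constructor
  · rintro ⟨p⟩
    induction p with
    | nil => exact .refl _ _
    | @cons u w v hadj p ih =>
      refine SameBlock.trans (fun z hz => ?_) ih
      obtain ⟨hpath, hcol⟩ := hadj
      rw [pathGraph_adj] at hpath
      rw [Set.mem_uIcc] at hz
      obtain rfl | rfl : z = u ∨ z = w := by omega
      · rfl
      · simpa using hcol.symm
  · intro h
    wlog huv : (u : ℕ) ≤ v generalizing u v
    · exact (this v u h.symm (by omega)).symm
    obtain ⟨k, hk⟩ : ∃ k, (v : ℕ) = u + k := ⟨v - u, by omega⟩
    induction k generalizing v with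
    | zero => rw [Fin.ext (hk.trans (add_zero _))]
    | succ k ih =>
      let w : Fin n := ⟨u + k, by omega⟩
      have hw : SameBlock (extend g) u w := h.of_mem (by simp [w, Set.mem_uIcc]; omega)
      refine (ih w hw (by simp [w]) rfl).trans (Adj.reachable ⟨?_, ?_⟩)
      · exact pathGraph_adj.mpr (.inl (by simp [w]; omega))
      · simpa using hw.eq.trans h.eq.symm

theorem floodMove_pathGraph_apply (g : Fin n → C) (v : Fin n) (d : C) (u : Fin n) :
    floodMove (pathGraph n) g v d u = if SameBlock (extend g) v u then d else g u := by
  simp only [floodMove, reachable_iff_sameBlock]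

def window (g : Fin n → C) (s m : ℕ) : Fin m → C := fun k => extend g (s + k)

theorem window_apply (g : Fin n → C) {s m : ℕ} (hsm : s + m ≤ n) (k : Fin m) :
    window g s m k = g ⟨s + k, by omega⟩ :=
  extend_of_lt g _

theorem extend_window (g : Fin n → C) {s m z : ℕ} (hz : z < m) :
    extend (window g s m) z = extend g (s + z) :=
  extend_of_lt _ hz

theorem window_window (g : Fin n → C) {s m s' m' : ℕ} (h : s' + m' ≤ m) :
    window (window g s m) s' m' = window g (s + s') m' := by
  funext k
  simp only [window]
  rw [extend_window _ (by omega), add_assoc]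

theorem sameBlock_extend_window_iff (g : Fin n → C) {s m p k : ℕ} (hp : p < m) (hk : k < m) :
    SameBlock (extend (window g s m)) p k ↔ SameBlock (extend g) (s + p) (s + k) := by
  simp only [SameBlock, Set.mem_uIcc]
  refine ⟨fun h z hz => ?_, fun h z hz => ?_⟩
  · have := h (z - s) (by omega)
    rwa [extend_window _ (by omega), extend_window _ hp, Nat.add_sub_cancel' (by omega)] at this
  · rw [extend_window _ (by omega), extend_window _ hp]
    exact h _ (by omega)

theorem window_floodMove_of_eq (g : Fin n → C) {s m : ℕ} (hsm : s + m ≤ n) {v : Fin n}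
    {p : Fin m} (hv : (v : ℕ) = s + p) (d : C) :
    window (floodMove (pathGraph n) g v d) s m = floodMove (pathGraph m) (window g s m) p d := by
  funext k
  rw [window_apply _ hsm, floodMove_pathGraph_apply, floodMove_pathGraph_apply,
    sameBlock_extend_window_iff _ p.isLt k.isLt, ← hv, window_apply _ hsm]

theorem window_floodMove_eq_or (g : Fin n → C) {s m : ℕ} (hsm : s + m ≤ n) (v : Fin n) (d : C) :
    window (floodMove (pathGraph n) g v d) s m = window g s m ∨
      ∃ p : Fin m, window (floodMove (pathGraph n) g v d) s m =
        floodMove (pathGraph m) (window g s m) p d := by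
  by_cases h : ∃ p : Fin m, SameBlock (extend g) v (s + p)
  · obtain ⟨p, hp⟩ := h
    let v' : Fin n := ⟨s + p, by omega⟩
    rw [floodMove_eq_of_reachable _ ((reachable_iff_sameBlock g v v').mpr hp)]
    exact .inr ⟨p, window_floodMove_of_eq g hsm rfl d⟩
  · refine .inl (funext fun k => ?_)
    rw [window_apply _ hsm, window_apply _ hsm, floodMove_pathGraph_apply,
      if_neg fun hk => h ⟨k, hk⟩]

theorem exists_window_floodSeq (g : Fin n → C) {s m : ℕ} (hsm : s + m ≤ n)
    (ms : List (Fin n × C)) :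
    ∃ ms' : List (Fin m × C), ms'.length ≤ ms.length ∧
      window (floodSeq (pathGraph n) ms g) s m = floodSeq (pathGraph m) ms' (window g s m) := by
  induction ms generalizing g with
  | nil => exact ⟨[], le_rfl, rfl⟩
  | cons mv ms ih =>
    obtain ⟨ms', hlen, heq⟩ := ih (floodMove (pathGraph n) g mv.1 mv.2)
    rcases window_floodMove_eq_or g hsm mv.1 mv.2 with h | ⟨p, h⟩
    · exact ⟨ms', hlen.trans (Nat.le_succ _), by rw [floodSeq, heq, h]⟩
    · exact ⟨(p, mv.2) :: ms', Nat.succ_le_succ hlen, by rw [floodSeq, heq, h]; rfl⟩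

theorem floodCostMin_window_le (g : Fin n → C) {s m : ℕ} (hsm : s + m ≤ n) :
    floodCostMin (pathGraph m) (window g s m) ≤ floodCostMin (pathGraph n) g := by
  obtain ⟨ms, d, hlen, hflood⟩ := exists_length_eq_floodCostMin (pathGraph n) g
  obtain ⟨ms', hle, heq⟩ := exists_window_floodSeq g hsm ms
  refine (floodCostMin_le_length _ (d := d) fun k => ?_).trans (hle.trans hlen.le)
  rw [← heq, window_apply _ hsm, hflood]

theorem floodCostMin_window_mono (g : Fin n → C) {s m s' m' : ℕ} (hs : s ≤ s')
    (h : s' + m' ≤ s + m) :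
    floodCostMin (pathGraph m') (window g s' m') ≤ floodCostMin (pathGraph m) (window g s m) := by
  rw [← Nat.add_sub_cancel' hs, ← window_window g (by omega : s' - s + m' ≤ m)]
  exact floodCostMin_window_le _ (by omega)

noncomputable def segmentCost (g : Fin n → C) (s e : ℕ) : ℕ :=
  floodCostMin (pathGraph (e - s)) (window g s (e - s))

theorem segmentCost_eq_zero_of_le (g : Fin n → C) {s e : ℕ} (h : e ≤ s) : segmentCost g s e = 0 :=
  (floodCostMin_eq_zero_iff _).mpr ⟨default, fun k => absurd k.isLt (by omega)⟩

theorem segmentCost_floodMove_eq_zero {g : Fin n → C} {s e : ℕ} (he : e ≤ n)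
    (h : segmentCost g s e = 0) (v : Fin n) (d : C) :
    segmentCost (floodMove (pathGraph n) g v d) s e = 0 := by
  obtain hes | hse := le_total e s
  · exact segmentCost_eq_zero_of_le _ hes
  rw [segmentCost, floodCostMin_eq_zero_iff] at h ⊢
  obtain ⟨c, hc⟩ := h
  rcases window_floodMove_eq_or g (by omega : s + (e - s) ≤ n) v d with h | ⟨p, h⟩ <;> rw [h]
  · exact ⟨c, hc⟩
  · exact ⟨d, floodMove_of_forall_eq _ (pathGraph_preconnected _) hc p d⟩

theorem exists_floodMove_segmentCost_lt {g : Fin n → C} {s e : ℕ} (he : e ≤ n)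
    (h : segmentCost g s e ≠ 0) :
    ∃ v : Fin n, s ≤ v ∧ (v : ℕ) < e ∧
      ∃ d, segmentCost (floodMove (pathGraph n) g v d) s e < segmentCost g s e := by
  have hse : s < e := by
    by_contra! hes
    exact h (segmentCost_eq_zero_of_le g hes)
  obtain ⟨p, d, hlt⟩ := exists_floodCostMin_floodMove_lt _ h
  refine ⟨⟨s + p, by omega⟩, by simp, by simp; omega, d, ?_⟩
  rwa [segmentCost, window_floodMove_of_eq g (by omega) rfl]

theorem exists_segmentCost_floodMove_le {g : Fin n → C} {v : Fin n} {s e : ℕ} (hv : (v : ℕ) < s)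
    (hse : s ≤ e) (he : e ≤ n) (d : C) :
    ∃ s', s ≤ s' ∧ s' ≤ e ∧
      (∀ u ∈ blockStarts (floodMove (pathGraph n) g v d), s ≤ u → s' ≤ u) ∧
      segmentCost (floodMove (pathGraph n) g v d) s' e ≤ segmentCost g s e := by
  obtain ⟨s', hss', hs'e, hin, hout⟩ := Nat.exists_cut_of_downward_closed
    (P := SameBlock (extend g) v) hse fun x y hsx hxy hy => hy.of_mem (by rw [Set.mem_uIcc]; omega)
  refine ⟨s', hss', hs'e, fun u hu hsu => ?_, ?_⟩
  · by_contra! hus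
    let w : Fin n := ⟨u - 1, by omega⟩
    have hvu := hin u hsu hus
    have hvw : SameBlock (extend g) v w := hvu.of_mem (by simp [w, Set.mem_uIcc]; omega)
    simp only [blockStarts, mem_filter, mem_univ, true_and] at hu
    refine hu w (by simp [w]; omega) ?_
    rw [floodMove_pathGraph_apply, floodMove_pathGraph_apply, if_pos hvw, if_pos hvu]
  · have hwin : window (floodMove (pathGraph n) g v d) s' (e - s') = window g s' (e - s') := by
      funext k
      rw [window_apply _ (by omega), window_apply _ (by omega), floodMove_pathGraph_apply,
        if_neg (hout _ (by simp) (by simp; omega))]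
    rw [segmentCost, hwin]
    exact floodCostMin_window_mono g hss' (by omega)

theorem card_blockStarts_filter_le_one {g : Fin n → C} {a s e : ℕ} (he : e ≤ n)
    (hstart : ∀ u ∈ blockStarts g, a ≤ u → s ≤ u) (h : segmentCost g s e = 0) :
    #((blockStarts g).filter fun u : Fin n => a ≤ u ∧ u < e) ≤ 1 := by
  obtain ⟨c, hc⟩ := (floodCostMin_eq_zero_iff _).mp h
  suffices hu : ∀ u ∈ blockStarts g, a ≤ u → (u : ℕ) < e → (u : ℕ) = s by
    refine card_le_one.mpr fun x hx y hy => ?_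
    simp only [mem_filter] at hx hy
    exact Fin.ext ((hu x hx.1 hx.2.1 hx.2.2).trans (hu y hy.1 hy.2.1 hy.2.2).symm)
  intro u hu hau hue
  refine le_antisymm (not_lt.mp fun hsu => ?_) (hstart u hu hau)
  simp only [blockStarts, mem_filter, mem_univ, true_and] at hu
  refine hu ⟨u - 1, by omega⟩ (by simp; omega) ?_
  have h1 := hc ⟨u - 1 - s, by omega⟩
  have h2 := hc ⟨u - s, by omega⟩
  rw [window_apply _ (by omega)] at h1 h2
  simp only [show s + (u - 1 - s) = u - 1 by omega, show s + (u - s) = (u : ℕ) by omega] at h1 h2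
  exact h1.trans h2.symm

/-- The part `[a j, s j)` of the `j`-th segment has already joined the block on its left (it
contains no block start), and only `[s j, e j)` is still to be flooded. One step replays the first
move of an optimal flooding of the leftmost unfinished segment: segments further left are
monochromatic and stay so, and segments further right can only lose an initial part to the block
coming from the left. -/
theorem exists_floodMove_sum_segmentCost_lt {g : Fin n → C} {a e s : Fin r → ℕ}
    (he : ∀ j, e j ≤ n) (hdisj : ∀ i j, i ≠ j → e i ≤ a j ∨ e j ≤ a i)
    (hs : ∀ j, a j ≤ s j ∧ s j ≤ e j) (hstart : ∀ j, ∀ u ∈ blockStarts g, a j ≤ u → s j ≤ u)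
    (hpos : ∑ j, segmentCost g (s j) (e j) ≠ 0) :
    ∃ (v : Fin n) (d : C) (s' : Fin r → ℕ), (∀ j, a j ≤ s' j ∧ s' j ≤ e j) ∧
      (∀ j, ∀ u ∈ blockStarts (floodMove (pathGraph n) g v d), a j ≤ u → s' j ≤ u) ∧
      ∑ j, segmentCost (floodMove (pathGraph n) g v d) (s' j) (e j) <
        ∑ j, segmentCost g (s j) (e j) := by
  obtain ⟨i₀, -, hi₀⟩ := exists_ne_zero_of_sum_ne_zero hpos
  obtain ⟨i, hi, hmin⟩ := exists_min_image
    (univ.filter fun j => segmentCost g (s j) (e j) ≠ 0) a ⟨i₀, by simpa using hi₀⟩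
  simp only [mem_filter, mem_univ, true_and] at hi hmin
  obtain ⟨v, hsv, hve, d, hlt⟩ := exists_floodMove_segmentCost_lt (he i) hi
  set g' := floodMove (pathGraph n) g v d
  have hstart' : ∀ j, ∀ u ∈ blockStarts g', a j ≤ u → s j ≤ u := fun j u hu =>
    hstart j u (blockStarts_floodMove_subset g v d hu)
  have hstep : ∀ j, ∃ sj, a j ≤ sj ∧ sj ≤ e j ∧ (∀ u ∈ blockStarts g', a j ≤ u → sj ≤ u) ∧
      segmentCost g' sj (e j) + (if j = i then 1 else 0) ≤ segmentCost g (s j) (e j) := by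
    intro j
    obtain rfl | hji := eq_or_ne j i
    · exact ⟨s j, (hs j).1, (hs j).2, hstart' j, by simp only [if_true]; omega⟩
    rcases hdisj i j hji.symm with hright | hleft
    · have hsj := hs j
      obtain ⟨sj, hssj, hsje, hsj, hcost⟩ :=
        exists_segmentCost_floodMove_le (g := g) (by omega : (v : ℕ) < s j) hsj.2 (he j) d
      exact ⟨sj, by omega, hsje, fun u hu hau => hsj u hu (hstart' j u hu hau),
        by simpa [hji] using hcost⟩
    · have hj : segmentCost g (s j) (e j) = 0 := by
        by_contra hj
        have : s j < e j := by
          by_contra! hes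
          exact hj (segmentCost_eq_zero_of_le g hes)
        have := hmin j hj
        have := hs j
        omega
      refine ⟨s j, (hs j).1, (hs j).2, hstart' j, ?_⟩
      rw [if_neg hji, hj, segmentCost_floodMove_eq_zero (he j) hj]
  choose s' hs'a hs'e hs'start hs'cost using hstep
  refine ⟨v, d, s', fun j => ⟨hs'a j, hs'e j⟩, hs'start, ?_⟩
  calc ∑ j, segmentCost g' (s' j) (e j)
      < ∑ j, (segmentCost g' (s' j) (e j) + if j = i then 1 else 0) := by
        rw [sum_add_distrib, sum_ite_eq']
        simp
    _ ≤ ∑ j, segmentCost g (s j) (e j) := sum_le_sum fun j _ => hs'cost j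

theorem exists_floodSeq_card_blockStarts_le_one {a e : Fin r → ℕ} (he : ∀ j, e j ≤ n)
    (hdisj : ∀ i j, i ≠ j → e i ≤ a j ∨ e j ≤ a i) (g : Fin n → C) (s : Fin r → ℕ)
    (hs : ∀ j, a j ≤ s j ∧ s j ≤ e j) (hstart : ∀ j, ∀ u ∈ blockStarts g, a j ≤ u → s j ≤ u) :
    ∃ ms : List (Fin n × C), ms.length ≤ ∑ j, segmentCost g (s j) (e j) ∧
      ∀ j, #((blockStarts (floodSeq (pathGraph n) ms g)).filter
        fun u : Fin n => a j ≤ u ∧ u < e j) ≤ 1 := by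
  induction hN : ∑ j, segmentCost g (s j) (e j) using Nat.strong_induction_on
    generalizing g s with | _ N ih => ?_
  by_cases h0 : N = 0
  · subst h0
    refine ⟨[], le_rfl, fun j => card_blockStarts_filter_le_one (he j) (hstart j) ?_⟩
    exact sum_eq_zero_iff.mp hN j (mem_univ j)
  obtain ⟨v, d, s', hs', hstart', hlt⟩ :=
    exists_floodMove_sum_segmentCost_lt he hdisj hs hstart (hN ▸ h0)
  obtain ⟨ms, hlen, hms⟩ := ih _ (hN ▸ hlt) _ s' hs' hstart' rfl
  exact ⟨(v, d) :: ms, by simp only [List.length_cons]; omega, hms⟩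

end Segments

end PathFlood

open PathFlood

/-- Let `P` be a path on `t` vertices with colouring `ω` from a colour-set `C` with
`|C| = c`, and let `Q_1, …, Q_r` be pairwise vertex-disjoint subpaths of `P` (the subpath
`Q_i` consisting of the `L i ≥ 1` consecutive vertices starting at vertex `a i`). Then
`m(P, ω) ≤ t - Σᵢ(|Q_i| - 1) - ⌈(t - Σᵢ(|Q_i| - 1)) / c⌉ + Σᵢ m(Q_i, ω|_{Q_i})`. -/
theorem path_disjoint_subpaths_bound {C : Type*} [Fintype C] (t c : ℕ)
    (hC : Fintype.card C = c) (ω : Fin t → C) (r : ℕ) (a L : Fin r → ℕ)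
    (hend : ∀ i, a i + L i ≤ t)
    (hdisj : ∀ i j, i ≠ j → a i + L i ≤ a j ∨ a j + L j ≤ a i) :
    floodCostMin (SimpleGraph.pathGraph t) ω ≤
      t - (∑ i, (L i - 1)) - (t - (∑ i, (L i - 1)) + c - 1) / c +
        ∑ i, floodCostMin (SimpleGraph.pathGraph (L i))
          (fun k => ω ⟨a i + (k : ℕ), by have h1 := k.isLt; have h2 := hend i; omega⟩) := by
  rcases isEmpty_or_nonempty C with hC₀ | hC₀
  · simp [floodCostMin]
  inhabit C
  subst hC
  have hQ : ∀ i, segmentCost ω (a i) (a i + L i) = floodCostMin (pathGraph (L i))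
      (fun k => ω ⟨a i + (k : ℕ), by have h1 := k.isLt; have h2 := hend i; omega⟩) := by
    intro i
    rw [segmentCost, Nat.add_sub_cancel_left]
    exact congrArg _ (funext (window_apply ω (hend i)))
  obtain ⟨ms, hlen, hms⟩ := exists_floodSeq_card_blockStarts_le_one (e := fun i => a i + L i)
    hend hdisj ω a (fun j => ⟨le_rfl, Nat.le_add_right _ _⟩) fun _ _ _ h => h
  have hB := Fin.card_add_sum_le_of_card_filter_le_one hend hdisj _ hms
  calc floodCostMin (pathGraph t) ω
      ≤ ms.length + floodCostMin (pathGraph t) (floodSeq (pathGraph t) ms ω) :=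
        floodCostMin_le_length_add _ ω ms
    _ ≤ ∑ i, segmentCost ω (a i) (a i + L i) + (t - ∑ i, (L i - 1) -
          (t - ∑ i, (L i - 1) + Fintype.card C - 1) / Fintype.card C) :=
        add_le_add hlen ((floodCostMin_le_card_blockStarts_sub _).trans
          (Nat.sub_ceilDiv_mono Fintype.card_pos (by omega)))
    _ = _ := by rw [add_comm, sum_congr rfl fun i _ => hQ i]
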